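/- Let 0 < γ ≤ σ²δ²/(2η²). Then the function v_{γ,0}(x) = −(γη/(γ+δ)²)·e^{λ_γ x} + (γ/(γ+δ))·(x + η/(γ+δ)) satisfies v_{γ,0}(0) = 0, solves (σ²/2)v''(x) + ηv'(x) − δv(x) + γ(x − v(x)) = 0 for all x > 0, is increasing and concave on (0,∞), satisfies v'_{γ,0}(0) ≤ 1 (with equality exactly when γ = σ²δ²/(2η²)), the ratio v'_{γ,0}/v''_{γ,0} is decreasing on (0,∞), and lim_{x↓0} v'_{γ,0}(x)/v''_{γ,0}(x) = −σ²/(2η). Moreover, if μ ≥ 2η then for every x > 0, sup over u ∈ [0,1] and ξ ∈ [0,x] of { (1/2)σ²u²v''_{γ,0}(x) + (η − (1−u)μ)v'_{γ,0}(x) − δv_{γ,0}(x) + γ(ξ + v_{γ,0}(x−ξ) − v_{γ,0}(x)) } equals 0. -/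

import Mathlib

open Real Filter Set

/-- λ_γ, the negative root of (σ²/2)r² + ηr − (δ+γ) = 0. -/
noncomputable def lamGamma (σ η δ γ : ℝ) : ℝ :=
  (-η - Real.sqrt (η ^ 2 + 2 * σ ^ 2 * (δ + γ))) / σ ^ 2

/-- The candidate value function v_{γ,0}. -/
noncomputable def vGamma0 (σ η δ γ : ℝ) (x : ℝ) : ℝ :=
  -(γ * η / (γ + δ) ^ 2) * Real.exp (lamGamma σ η δ γ * x) +
    (γ / (γ + δ)) * (x + η / (γ + δ))

/-!
Write `v = -A e^{λx} + B (x + η/(γ+δ))` with `A, B > 0` and `λ = λ_γ < 0`. Since `λ` solves the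
characteristic equation, `v` solves the ODE, and the shape of `v` is read off from
`v' = -Aλ e^{λx} + B > 0` and `v'' = -Aλ² e^{λx} < 0`; the ratio `v'/v''` is `1/λ` minus a positive
multiple of `e^{-λx}`.

The threshold on `γ` enters only through `v'(0)`: the condition `v'(0) ≤ 1` says `-δ(γ+δ)/(γη) ≤ λ`,
which, `λ` being the negative root, is the sign condition on the characteristic quadratic at
`-δ(γ+δ)/(γη)`, and that value is a positive multiple of `σ²δ²/(2η²) - γ`.

In the HJB supremum, `σ²v'' + 2ηv'` vanishes at `0` (this is also the limit of `v'/v''`) and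
increases, which makes the control `u = 1` optimal when `μ ≥ 2η`; `v` lies below its tangent
`v'(0) x ≤ x` at the origin, which makes `ξ = x` optimal; at `(1, x)` the Hamiltonian is the ODE.
-/

open Topology

section lamGamma

variable {σ η δ γ : ℝ}

theorem sq_mul_lamGamma_add (hσ : σ ≠ 0) :
    σ ^ 2 * lamGamma σ η δ γ + η = -√(η ^ 2 + 2 * σ ^ 2 * (δ + γ)) := by
  rw [lamGamma]; field_simp; ring

theorem lamGamma_neg (hσ : σ ≠ 0) (hη : 0 < η) : lamGamma σ η δ γ < 0 :=
  div_neg_of_neg_of_pos (by linarith [sqrt_nonneg (η ^ 2 + 2 * σ ^ 2 * (δ + γ))]) (by positivity)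

theorem lamGamma_isRoot (hσ : σ ≠ 0) (hδγ : 0 ≤ δ + γ) :
    σ ^ 2 / 2 * lamGamma σ η δ γ ^ 2 + η * lamGamma σ η δ γ = δ + γ := by
  have hsq : (σ ^ 2 * lamGamma σ η δ γ + η) ^ 2 = η ^ 2 + 2 * σ ^ 2 * (δ + γ) := by
    rw [sq_mul_lamGamma_add hσ, neg_sq, sq_sqrt (by positivity)]
  apply mul_left_cancel₀ (pow_ne_zero 2 hσ)
  linear_combination hsq / 2

theorem quadratic_eq_mul_sub_lamGamma (hσ : σ ≠ 0) (hδγ : 0 ≤ δ + γ) (r : ℝ) :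
    σ ^ 2 / 2 * r ^ 2 + η * r - (δ + γ) =
      (r - lamGamma σ η δ γ) * (σ ^ 2 / 2 * (r + lamGamma σ η δ γ) + η) := by
  linear_combination lamGamma_isRoot (η := η) hσ hδγ

-- With `quadratic_eq_mul_sub_lamGamma`: for `r ≤ 0` the quadratic has the sign of `λ_γ - r`.
theorem quadratic_cofactor_neg (hσ : σ ≠ 0) (hδγ : 0 < δ + γ) {r : ℝ} (hr : r ≤ 0) :
    σ ^ 2 / 2 * (r + lamGamma σ η δ γ) + η < 0 := by
  have hL := sq_mul_lamGamma_add (δ := δ) (γ := γ) (η := η) hσ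
  have hR : η < √(η ^ 2 + 2 * σ ^ 2 * (δ + γ)) :=
    lt_sqrt_of_sq_lt (by linarith [mul_pos (by positivity : 0 < σ ^ 2) hδγ])
  linarith [mul_nonpos_of_nonneg_of_nonpos (sq_nonneg σ) hr]

end lamGamma

section derivatives

variable (σ η δ γ : ℝ)

theorem hasDerivAt_vGamma0 (x : ℝ) :
    HasDerivAt (vGamma0 σ η δ γ)
      (-(γ * η / (γ + δ) ^ 2 * lamGamma σ η δ γ) * exp (lamGamma σ η δ γ * x) + γ / (γ + δ))
      x := by
  have := (((hasDerivAt_id x).const_mul (lamGamma σ η δ γ)).exp.const_mul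
    (-(γ * η / (γ + δ) ^ 2))).add
      (((hasDerivAt_id x).add_const (η / (γ + δ))).const_mul (γ / (γ + δ)))
  exact this.congr_deriv (by simp only [id]; ring)

theorem deriv_vGamma0 :
    deriv (vGamma0 σ η δ γ) = fun x =>
      -(γ * η / (γ + δ) ^ 2 * lamGamma σ η δ γ) * exp (lamGamma σ η δ γ * x) + γ / (γ + δ) :=
  funext fun x => (hasDerivAt_vGamma0 σ η δ γ x).deriv

theorem deriv_deriv_vGamma0 :
    deriv (deriv (vGamma0 σ η δ γ)) = fun x =>
      -(γ * η / (γ + δ) ^ 2 * lamGamma σ η δ γ ^ 2) * exp (lamGamma σ η δ γ * x) := by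
  rw [deriv_vGamma0]
  funext x
  have := ((((hasDerivAt_id x).const_mul (lamGamma σ η δ γ)).exp.const_mul
    (-(γ * η / (γ + δ) ^ 2 * lamGamma σ η δ γ))).add_const (γ / (γ + δ))).deriv
  simp only [id] at this
  convert this using 1; ring

theorem continuous_vGamma0 : Continuous (vGamma0 σ η δ γ) := by
  unfold vGamma0; fun_prop

end derivatives

section vGamma0

variable {σ η δ γ : ℝ}

theorem vGamma0_zero (hγδ : γ + δ ≠ 0) : vGamma0 σ η δ γ 0 = 0 := by
  rw [vGamma0, mul_zero, exp_zero]; field_simp; ring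

theorem vGamma0_ode (hσ : σ ≠ 0) (hγδ : 0 < γ + δ) (x : ℝ) :
    σ ^ 2 / 2 * deriv (deriv (vGamma0 σ η δ γ)) x + η * deriv (vGamma0 σ η δ γ) x -
      δ * vGamma0 σ η δ γ x + γ * (x - vGamma0 σ η δ γ x) = 0 := by
  have hroot := lamGamma_isRoot (η := η) hσ (by linarith : 0 ≤ δ + γ)
  rw [deriv_deriv_vGamma0, deriv_vGamma0, vGamma0]
  field_simp
  linear_combination (-2 * γ * η * exp (lamGamma σ η δ γ * x)) * hroot

theorem deriv_vGamma0_pos (hσ : σ ≠ 0) (hη : 0 < η) (hγ : 0 < γ) (hγδ : 0 < γ + δ) (x : ℝ) :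
    0 < deriv (vGamma0 σ η δ γ) x := by
  have hL := lamGamma_neg (δ := δ) (γ := γ) hσ hη
  rw [deriv_vGamma0]
  have : 0 < -(γ * η / (γ + δ) ^ 2 * lamGamma σ η δ γ) :=
    neg_pos.2 (mul_neg_of_pos_of_neg (by positivity) hL)
  positivity

theorem deriv_deriv_vGamma0_neg (hσ : σ ≠ 0) (hη : 0 < η) (hγ : 0 < γ) (hγδ : 0 < γ + δ)
    (x : ℝ) : deriv (deriv (vGamma0 σ η δ γ)) x < 0 := by
  have hL := (lamGamma_neg (δ := δ) (γ := γ) hσ hη).ne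
  simp only [deriv_deriv_vGamma0, neg_mul]
  exact neg_neg_of_pos (by positivity)

theorem strictMono_vGamma0 (hσ : σ ≠ 0) (hη : 0 < η) (hγ : 0 < γ) (hγδ : 0 < γ + δ) :
    StrictMono (vGamma0 σ η δ γ) :=
  strictMono_of_deriv_pos (deriv_vGamma0_pos hσ hη hγ hγδ)

theorem strictConcaveOn_vGamma0 (hσ : σ ≠ 0) (hη : 0 < η) (hγ : 0 < γ) (hγδ : 0 < γ + δ) :
    StrictConcaveOn ℝ univ (vGamma0 σ η δ γ) :=
  strictConcaveOn_univ_of_deriv2_neg (continuous_vGamma0 σ η δ γ)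
    (deriv_deriv_vGamma0_neg hσ hη hγ hγδ)

theorem one_sub_deriv_vGamma0_zero (hσ : σ ≠ 0) (hη : 0 < η) (hγ : 0 < γ) (hδ : 0 ≤ δ) :
    ∃ k > 0, 1 - deriv (vGamma0 σ η δ γ) 0 = k * (σ ^ 2 * δ ^ 2 / (2 * η ^ 2) - γ) := by
  set L := lamGamma σ η δ γ
  set M := δ * (γ + δ) / (γ * η)
  have hM : 0 ≤ M := by positivity
  have hcofactor := quadratic_cofactor_neg (η := η) hσ (by linarith : 0 < δ + γ) (neg_nonpos.2 hM)
  have hfac := quadratic_eq_mul_sub_lamGamma (η := η) hσ (by linarith : 0 ≤ δ + γ) (-M)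
  have hq : σ ^ 2 / 2 * (-M) ^ 2 + η * (-M) - (δ + γ) =
      (γ + δ) ^ 2 / γ ^ 2 * (σ ^ 2 * δ ^ 2 / (2 * η ^ 2) - γ) := by
    simp only [M]; field_simp; ring
  have hML : M + L = (γ + δ) ^ 2 / γ ^ 2 * (σ ^ 2 * δ ^ 2 / (2 * η ^ 2) - γ) /
      -(σ ^ 2 / 2 * (-M + L) + η) := by
    rw [eq_div_iff (by linarith), ← hq, hfac]; ring
  refine ⟨η / (γ * -(σ ^ 2 / 2 * (-M + L) + η)), div_pos hη (mul_pos hγ (by linarith)), ?_⟩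
  have hγδ : γ + δ ≠ 0 := by positivity
  calc 1 - deriv (vGamma0 σ η δ γ) 0 = γ * η / (γ + δ) ^ 2 * (M + L) := by
        simp only [deriv_vGamma0, mul_zero, exp_zero, M]; field_simp; ring
    _ = _ := by rw [hML]; field_simp

theorem deriv_vGamma0_zero_le_one (hσ : σ ≠ 0) (hη : 0 < η) (hγ : 0 < γ) (hδ : 0 ≤ δ)
    (hγ0 : γ ≤ σ ^ 2 * δ ^ 2 / (2 * η ^ 2)) : deriv (vGamma0 σ η δ γ) 0 ≤ 1 := by
  obtain ⟨k, hk, hv⟩ := one_sub_deriv_vGamma0_zero hσ hη hγ hδ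
  linarith [mul_nonneg hk.le (sub_nonneg.2 hγ0)]

theorem deriv_vGamma0_zero_eq_one_iff (hσ : σ ≠ 0) (hη : 0 < η) (hγ : 0 < γ) (hδ : 0 ≤ δ) :
    deriv (vGamma0 σ η δ γ) 0 = 1 ↔ γ = σ ^ 2 * δ ^ 2 / (2 * η ^ 2) := by
  obtain ⟨k, hk, hv⟩ := one_sub_deriv_vGamma0_zero hσ hη hγ hδ
  rw [← sub_eq_zero, ← neg_sub, neg_eq_zero, hv, mul_eq_zero, or_iff_right hk.ne', sub_eq_zero,
    eq_comm]

theorem vGamma0_le_deriv_zero_mul (hγ : 0 ≤ γ) (hη : 0 ≤ η) (y : ℝ) :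
    vGamma0 σ η δ γ y ≤ deriv (vGamma0 σ η δ γ) 0 * y := by
  have hA : 0 ≤ γ * η / (γ + δ) ^ 2 := by positivity
  have htangent := mul_le_mul_of_nonneg_left (add_one_le_exp (lamGamma σ η δ γ * y)) hA
  have hc : γ / (γ + δ) * (η / (γ + δ)) = γ * η / (γ + δ) ^ 2 := by rw [div_mul_div_comm, sq]
  simp only [vGamma0, deriv_vGamma0, mul_zero, exp_zero]
  linear_combination htangent + hc

theorem vGamma0_le_self (hσ : σ ≠ 0) (hη : 0 < η) (hγ : 0 < γ) (hδ : 0 ≤ δ)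
    (hγ0 : γ ≤ σ ^ 2 * δ ^ 2 / (2 * η ^ 2)) {y : ℝ} (hy : 0 ≤ y) : vGamma0 σ η δ γ y ≤ y :=
  (vGamma0_le_deriv_zero_mul hγ.le hη.le y).trans <| by
    simpa using mul_le_mul_of_nonneg_right (deriv_vGamma0_zero_le_one hσ hη hγ hδ hγ0) hy

theorem sq_mul_deriv_deriv_vGamma0_zero_add (hσ : σ ≠ 0) (hγδ : 0 < γ + δ) :
    σ ^ 2 * deriv (deriv (vGamma0 σ η δ γ)) 0 + 2 * η * deriv (vGamma0 σ η δ γ) 0 = 0 := by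
  have hroot := lamGamma_isRoot (η := η) hσ (by linarith : 0 ≤ δ + γ)
  rw [deriv_deriv_vGamma0]
  simp only [deriv_vGamma0, mul_zero, exp_zero]
  field_simp
  linear_combination (-2 * γ * η) * hroot

theorem sq_mul_deriv_deriv_vGamma0_add_nonneg (hσ : σ ≠ 0) (hη : 0 < η) (hγ : 0 ≤ γ)
    (hγδ : 0 < γ + δ) {x : ℝ} (hx : 0 ≤ x) :
    0 ≤ σ ^ 2 * deriv (deriv (vGamma0 σ η δ γ)) x + 2 * η * deriv (vGamma0 σ η δ γ) x := by
  set L := lamGamma σ η δ γ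
  have h0 := sq_mul_deriv_deriv_vGamma0_zero_add (η := η) hσ hγδ
  have hslope := quadratic_cofactor_neg (η := η) hσ (by linarith : 0 < δ + γ) le_rfl
  have hL := lamGamma_neg (δ := δ) (γ := γ) hσ hη
  have hexp : exp (L * x) ≤ 1 := exp_le_one_iff.2 (mul_nonpos_of_nonpos_of_nonneg hL.le hx)
  have hA : 0 ≤ γ * η / (γ + δ) ^ 2 := by positivity
  rw [deriv_deriv_vGamma0] at h0 ⊢
  simp only [deriv_vGamma0, mul_zero, exp_zero] at h0 ⊢
  have hincr : 0 ≤ γ * η / (γ + δ) ^ 2 * -L * ((σ ^ 2 * L + 2 * η) * (exp (L * x) - 1)) :=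
    mul_nonneg (mul_nonneg hA (by linarith)) (mul_nonneg_of_nonpos_of_nonpos (by linarith)
      (by linarith))
  linear_combination hincr - h0

theorem deriv_div_deriv_deriv_vGamma0 (hσ : σ ≠ 0) (hη : 0 < η) (hγ : 0 < γ)
    (hγδ : 0 < γ + δ) (x : ℝ) :
    deriv (vGamma0 σ η δ γ) x / deriv (deriv (vGamma0 σ η δ γ)) x =
      (lamGamma σ η δ γ)⁻¹ - (γ + δ) / (η * lamGamma σ η δ γ ^ 2) *
        exp (-(lamGamma σ η δ γ * x)) := by
  have hL := (lamGamma_neg (δ := δ) (γ := γ) hσ hη).ne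
  rw [deriv_deriv_vGamma0, exp_neg]
  simp only [deriv_vGamma0]
  field_simp
  ring

theorem antitone_deriv_div_deriv_deriv_vGamma0 (hσ : σ ≠ 0) (hη : 0 < η) (hγ : 0 < γ)
    (hγδ : 0 < γ + δ) :
    Antitone fun x => deriv (vGamma0 σ η δ γ) x / deriv (deriv (vGamma0 σ η δ γ)) x := by
  have hL := lamGamma_neg (δ := δ) (γ := γ) hσ hη
  intro a b hab
  simp only [deriv_div_deriv_deriv_vGamma0 hσ hη hγ hγδ]
  have hexp : exp (-(lamGamma σ η δ γ * a)) ≤ exp (-(lamGamma σ η δ γ * b)) :=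
    exp_le_exp.2 (by nlinarith)
  exact sub_le_sub_left (mul_le_mul_of_nonneg_left hexp (by positivity)) _

theorem tendsto_deriv_div_deriv_deriv_vGamma0 (hσ : σ ≠ 0) (hη : 0 < η) (hγ : 0 < γ)
    (hγδ : 0 < γ + δ) :
    Tendsto (fun x => deriv (vGamma0 σ η δ γ) x / deriv (deriv (vGamma0 σ η δ γ)) x)
      (𝓝 0) (𝓝 (-σ ^ 2 / (2 * η))) := by
  have hd1 : Continuous (deriv (vGamma0 σ η δ γ)) := by rw [deriv_vGamma0]; fun_prop
  have hd2 : Continuous (deriv (deriv (vGamma0 σ η δ γ))) := by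
    rw [deriv_deriv_vGamma0]; fun_prop
  have h0 := sq_mul_deriv_deriv_vGamma0_zero_add (η := η) hσ hγδ
  have hd20 := (deriv_deriv_vGamma0_neg hσ hη hγ hγδ 0).ne
  have hval : deriv (vGamma0 σ η δ γ) 0 / deriv (deriv (vGamma0 σ η δ γ)) 0 =
      -σ ^ 2 / (2 * η) := by
    field_simp
    linear_combination h0
  rw [← hval]
  exact (hd1.tendsto 0).div (hd2.tendsto 0) hd20

end vGamma0

theorem control_terms_le {σ η μ v₁ v₂ u : ℝ} (hv₂ : v₂ ≤ 0) (hμ : 0 ≤ σ ^ 2 * v₂ + μ * v₁)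
    (hu : u ≤ 1) :
    1 / 2 * σ ^ 2 * u ^ 2 * v₂ + (η - (1 - u) * μ) * v₁ ≤ σ ^ 2 / 2 * v₂ + η * v₁ := by
  nlinarith [mul_nonneg (sub_nonneg.2 hu) hμ,
    mul_nonneg (mul_nonneg (sq_nonneg σ) (sq_nonneg (1 - u))) (neg_nonneg.2 hv₂)]

theorem sSup_hjb_vGamma0 {σ η δ γ μ : ℝ} (hσ : σ ≠ 0) (hη : 0 < η) (hγ : 0 < γ) (hδ : 0 ≤ δ)
    (hγ0 : γ ≤ σ ^ 2 * δ ^ 2 / (2 * η ^ 2)) (hμ : 2 * η ≤ μ) {x : ℝ} (hx : 0 ≤ x) :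
    sSup ((fun p : ℝ × ℝ =>
        1 / 2 * σ ^ 2 * p.1 ^ 2 * deriv (deriv (vGamma0 σ η δ γ)) x +
          (η - (1 - p.1) * μ) * deriv (vGamma0 σ η δ γ) x -
          δ * vGamma0 σ η δ γ x +
          γ * (p.2 + vGamma0 σ η δ γ (x - p.2) - vGamma0 σ η δ γ x)) ''
      (Icc 0 1 ×ˢ Icc 0 x)) = 0 := by
  have hγδ : 0 < γ + δ := by linarith
  have hode := vGamma0_ode (η := η) hσ hγδ x
  apply IsGreatest.csSup_eq
  refine ⟨⟨(1, x), ⟨⟨zero_le_one, le_rfl⟩, hx, le_rfl⟩, ?_⟩, ?_⟩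
  · simp only [sub_self, vGamma0_zero hγδ.ne']
    linear_combination hode
  · rintro _ ⟨⟨u, ξ⟩, ⟨⟨-, hu₁⟩, -, hξx⟩, rfl⟩
    have hv₁ := deriv_vGamma0_pos hσ hη hγ hγδ x
    have hv₂ := deriv_deriv_vGamma0_neg hσ hη hγ hγδ x
    have hdrift := sq_mul_deriv_deriv_vGamma0_add_nonneg hσ hη hγ.le hγδ hx
    have hμv : 0 ≤ σ ^ 2 * deriv (deriv (vGamma0 σ η δ γ)) x + μ * deriv (vGamma0 σ η δ γ) x := by
      nlinarith [mul_nonneg (sub_nonneg.2 hμ) hv₁.le]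
    have hcontrol := control_terms_le (η := η) hv₂.le hμv hu₁
    have hjump : ξ + vGamma0 σ η δ γ (x - ξ) ≤ x := by
      linarith [vGamma0_le_self hσ hη hγ hδ hγ0 (sub_nonneg.2 hξx)]
    linarith [mul_le_mul_of_nonneg_left hjump hγ.le]

theorem vGamma0_properties_general (σ η δ γ μ : ℝ)
    (hσ : 0 < σ) (hη : 0 < η) (hδ : 0 < δ)
    (hγ : 0 < γ) (hγ0 : γ ≤ σ ^ 2 * δ ^ 2 / (2 * η ^ 2)) :
    vGamma0 σ η δ γ 0 = 0 ∧
    (∀ x : ℝ, 0 < x →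
      σ ^ 2 / 2 * deriv (deriv (vGamma0 σ η δ γ)) x + η * deriv (vGamma0 σ η δ γ) x -
        δ * vGamma0 σ η δ γ x + γ * (x - vGamma0 σ η δ γ x) = 0) ∧
    MonotoneOn (vGamma0 σ η δ γ) (Set.Ioi 0) ∧
    ConcaveOn ℝ (Set.Ioi 0) (vGamma0 σ η δ γ) ∧
    deriv (vGamma0 σ η δ γ) 0 ≤ 1 ∧
    (deriv (vGamma0 σ η δ γ) 0 = 1 ↔ γ = σ ^ 2 * δ ^ 2 / (2 * η ^ 2)) ∧
    AntitoneOn (fun x =>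
      deriv (vGamma0 σ η δ γ) x / deriv (deriv (vGamma0 σ η δ γ)) x) (Set.Ioi 0) ∧
    Tendsto (fun x => deriv (vGamma0 σ η δ γ) x / deriv (deriv (vGamma0 σ η δ γ)) x)
      (nhdsWithin 0 (Set.Ioi 0)) (nhds (-σ ^ 2 / (2 * η))) ∧
    (2 * η ≤ μ → ∀ x : ℝ, 0 < x →
      sSup ((fun p : ℝ × ℝ =>
          1 / 2 * σ ^ 2 * p.1 ^ 2 * deriv (deriv (vGamma0 σ η δ γ)) x +
            (η - (1 - p.1) * μ) * deriv (vGamma0 σ η δ γ) x -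
            δ * vGamma0 σ η δ γ x +
            γ * (p.2 + vGamma0 σ η δ γ (x - p.2) - vGamma0 σ η δ γ x)) ''
        (Set.Icc 0 1 ×ˢ Set.Icc 0 x)) = 0) := by
  have hσ₀ := hσ.ne'
  have hγδ : 0 < γ + δ := add_pos hγ hδ
  exact ⟨vGamma0_zero hγδ.ne',
    fun x _ => vGamma0_ode hσ₀ hγδ x,
    (strictMono_vGamma0 hσ₀ hη hγ hγδ).monotone.monotoneOn _,
    (strictConcaveOn_vGamma0 hσ₀ hη hγ hγδ).concaveOn.subset (subset_univ _) (convex_Ioi 0),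
    deriv_vGamma0_zero_le_one hσ₀ hη hγ hδ.le hγ0,
    deriv_vGamma0_zero_eq_one_iff hσ₀ hη hγ hδ.le,
    (antitone_deriv_div_deriv_deriv_vGamma0 hσ₀ hη hγ hγδ).antitoneOn _,
    (tendsto_deriv_div_deriv_deriv_vGamma0 hσ₀ hη hγ hγδ).mono_left nhdsWithin_le_nhds,
    fun hμ x hx => sSup_hjb_vGamma0 hσ₀ hη hγ hδ.le hγ0 hμ hx.le⟩

theorem vGamma0_properties (σ η δ γ μ : ℝ)
    (hσ : 0 < σ) (hη : 0 < η) (hδ : 0 < δ) (hμ : 0 < μ)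
    (hγ : 0 < γ) (hγ0 : γ ≤ σ ^ 2 * δ ^ 2 / (2 * η ^ 2)) :
    vGamma0 σ η δ γ 0 = 0 ∧
    (∀ x : ℝ, 0 < x →
      σ ^ 2 / 2 * deriv (deriv (vGamma0 σ η δ γ)) x + η * deriv (vGamma0 σ η δ γ) x -
        δ * vGamma0 σ η δ γ x + γ * (x - vGamma0 σ η δ γ x) = 0) ∧
    MonotoneOn (vGamma0 σ η δ γ) (Set.Ioi 0) ∧
    ConcaveOn ℝ (Set.Ioi 0) (vGamma0 σ η δ γ) ∧
    deriv (vGamma0 σ η δ γ) 0 ≤ 1 ∧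
    (deriv (vGamma0 σ η δ γ) 0 = 1 ↔ γ = σ ^ 2 * δ ^ 2 / (2 * η ^ 2)) ∧
    AntitoneOn (fun x =>
      deriv (vGamma0 σ η δ γ) x / deriv (deriv (vGamma0 σ η δ γ)) x) (Set.Ioi 0) ∧
    Tendsto (fun x => deriv (vGamma0 σ η δ γ) x / deriv (deriv (vGamma0 σ η δ γ)) x)
      (nhdsWithin 0 (Set.Ioi 0)) (nhds (-σ ^ 2 / (2 * η))) ∧
    (2 * η ≤ μ → ∀ x : ℝ, 0 < x →
      sSup ((fun p : ℝ × ℝ =>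
          1 / 2 * σ ^ 2 * p.1 ^ 2 * deriv (deriv (vGamma0 σ η δ γ)) x +
            (η - (1 - p.1) * μ) * deriv (vGamma0 σ η δ γ) x -
            δ * vGamma0 σ η δ γ x +
            γ * (p.2 + vGamma0 σ η δ γ (x - p.2) - vGamma0 σ η δ γ x)) ''
        (Set.Icc 0 1 ×ˢ Set.Icc 0 x)) = 0) :=
  vGamma0_properties_general σ η δ γ μ hσ hη hδ hγ hγ0
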